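/- For a nonregular filtration, the good part g = qfq + ∑_j E_{j−1}(p_j f p_j) of the Calderón–Zygmund decomposition at height λ satisfies ‖g‖₂² ≤ 6λ‖f‖₁. In particular, one has the identity E_{j−1}(p_j f p_j) = q_{j−1}E_{j−1}(f)q_{j−1} − E_{j−1}(q_j E_j(f) q_j), the telescoping bound ‖∑_j (q_j E_j(f) q_j − q_{j−1}E_{j−1}(f)q_{j−1})‖₂² ≤ λ‖f‖₁, and the martingale-difference bound ∑_j ‖q_j E_j(f)q_j − E_{j−1}(q_j E_j(f) q_j)‖₂² ≤ 2λ‖f‖₁. -/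

import Mathlib

/-!
Write `x j = q j * E j f * q j` (`cutExp`) and `p j = q j - q (j + 1)` (`diffProj`). Because
`q (j + 1) ≤ q j` commutes with `q j * E (j + 1) f * q j`, that matrix splits as `x (j + 1) + r j`
with `r j = p j * E (j + 1) f * p j = E (j + 1) (p j * f * p j) ≥ 0` (`cutDefect`). Applying `E j`
gives `E j (x (j + 1)) = x j - E j (r j)` and `E j (p j * f * p j) = x j - E j (x (j + 1))`.

Every quadratic quantity is then paid for by `λ` times a trace of `f`, because `x j ≤ λ` and
`∑ j < N, tr (r j) = tr f - tr (q N * f)` telescopes. Pythagoras for `E j` gives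
`‖x (j + 1) - E j (x (j + 1))‖₂² ≤ ‖x (j + 1)‖₂² - ‖x j‖₂² + 2λ tr (r j)`, and the good part is
the orthogonal sum of `x 0`, the martingale differences `x (j + 1) - E j (x (j + 1))` and
`q N * f * q N - E N (q N * f * q N)`, whence `‖g‖₂² ≤ 2λ ‖f‖₁`.
-/

open Matrix
open scoped ComplexOrder

/-- The positive semidefinite square root of a positive semidefinite matrix
(removed from Mathlib; restored with its former definition). -/
noncomputable def Matrix.PosSemidef.sqrt {n 𝕜 : Type*} [Fintype n] [RCLike 𝕜] [DecidableEq n]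
    {A : Matrix n n 𝕜} (hA : A.PosSemidef) : Matrix n n 𝕜 :=
  (hA.1.eigenvectorUnitary : Matrix n n 𝕜) *
    diagonal (fun i => ((Real.sqrt (hA.1.eigenvalues i) : ℝ) : 𝕜)) *
    (star hA.1.eigenvectorUnitary : Matrix n n 𝕜)

/-- The trace norm `‖A‖₁ = tr √(AᴴA)` of a complex matrix. -/
noncomputable def traceNorm {m : ℕ} (A : Matrix (Fin m) (Fin m) ℂ) : ℝ :=
  ((Matrix.posSemidef_conjTranspose_mul_self A).sqrt.trace).re

/-- The squared Hilbert–Schmidt (L₂) norm `‖A‖₂² = tr(AᴴA)`. -/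
noncomputable def frobSq {m : ℕ} (A : Matrix (Fin m) (Fin m) ℂ) : ℝ :=
  ((Aᴴ * A).trace).re

namespace Matrix

variable {n : Type*} [Fintype n]

theorem PosSemidef.re_trace_nonneg {A : Matrix n n ℂ} (hA : A.PosSemidef) :
    0 ≤ A.trace.re :=
  (Complex.nonneg_iff.mp hA.trace_nonneg).1

theorem PosSemidef.mul_mul_of_isSelfAdjoint {A P : Matrix n n ℂ} (hA : A.PosSemidef)
    (hP : IsSelfAdjoint P) : (P * A * P).PosSemidef := by
  simpa only [← star_eq_conjTranspose, hP.star_eq] using hA.conjTranspose_mul_mul_same P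

theorem IsStarProjection.posSemidef {P : Matrix n n ℂ} (hP : IsStarProjection P) :
    P.PosSemidef := by
  open scoped MatrixOrder in
  exact nonneg_iff_posSemidef.mp hP.nonneg

theorem trace_add_mul_self_of_trace_mul_eq_zero {A B : Matrix n n ℂ}
    (h : (A * B).trace = 0) :
    ((A + B) * (A + B)).trace = (A * A).trace + (B * B).trace := by
  rw [Matrix.add_mul, Matrix.mul_add, Matrix.mul_add, trace_add, trace_add, trace_add,
    trace_mul_comm B A, h]
  ring

variable [DecidableEq n]

theorem PosSemidef.re_trace_mul_nonneg {A B : Matrix n n ℂ} (hA : A.PosSemidef)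
    (hB : B.PosSemidef) : 0 ≤ (A * B).trace.re := by
  obtain ⟨C, rfl⟩ : ∃ C, A = star C * C := by
    open scoped MatrixOrder in
    exact CStarAlgebra.nonneg_iff_eq_star_mul_self.mp hA.nonneg
  rw [Matrix.mul_assoc, trace_mul_comm]
  exact (hB.mul_mul_conjTranspose_same C).re_trace_nonneg

theorem PosSemidef.re_trace_mul_le_re_trace_mul {A B C : Matrix n n ℂ} (hA : A.PosSemidef)
    (hBC : (C - B).PosSemidef) : (A * B).trace.re ≤ (A * C).trace.re := by
  have := hA.re_trace_mul_nonneg hBC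
  rw [Matrix.mul_sub, trace_sub, Complex.sub_re] at this
  linarith

theorem PosSemidef.re_trace_mul_le_of_le_smul {A B P : Matrix n n ℂ} {c : ℝ}
    (hA : A.PosSemidef) (hB : ((c : ℂ) • P - B).PosSemidef) (hAP : A * P = A) :
    (A * B).trace.re ≤ c * A.trace.re := by
  simpa [Matrix.mul_smul, hAP] using hA.re_trace_mul_le_re_trace_mul hB

theorem IsStarProjection.re_trace_mul_mul_sq_le {A P : Matrix n n ℂ} {c : ℝ}
    (hP : IsStarProjection P) (hA : A.PosSemidef) (hc : ((c : ℂ) • P - P * A * P).PosSemidef) :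
    (P * A * P * (P * A * P)).trace.re ≤ c * (P * A).trace.re := by
  rw [← show (P * A * P).trace = (P * A).trace by rw [trace_mul_cycle, hP.isIdempotentElem.eq]]
  refine (hA.mul_mul_of_isSelfAdjoint hP.isSelfAdjoint).re_trace_mul_le_of_le_smul hc ?_
  rw [Matrix.mul_assoc, hP.isIdempotentElem.eq]

end Matrix

theorem frobSq_of_isHermitian {m : ℕ} {A : Matrix (Fin m) (Fin m) ℂ} (hA : A.IsHermitian) :
    frobSq A = (A * A).trace.re := by
  rw [frobSq, hA.eq]

theorem traceNorm_of_posSemidef {m : ℕ} {A : Matrix (Fin m) (Fin m) ℂ} (hA : A.PosSemidef) :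
    traceNorm A = A.trace.re := by
  open scoped MatrixOrder in
  have hsqrt : (posSemidef_conjTranspose_mul_self A).sqrt = cfc Real.sqrt (Aᴴ * A) := by
    rw [(posSemidef_conjTranspose_mul_self A).1.cfc_eq]
    rfl
  open scoped MatrixOrder in
  rw [traceNorm, hsqrt, hA.1.eq, ← cfcₙ_eq_cfc, ← CFC.sqrt_eq_real_sqrt (A * A),
    CFC.sqrt_mul_self A hA.nonneg]

theorem IsIdempotentElem.mul_mul_eq_add_sub_mul_mul_sub {R : Type*} [Ring R] {P Q z : R}
    (hQ : IsIdempotentElem Q) (hQP : Q * P = Q) (hPQ : P * Q = Q)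
    (hcomm : Commute Q (P * z * P)) :
    P * z * P = Q * z * Q + (P - Q) * z * (P - Q) := by
  have hPzQ : P * z * Q = Q * z * P := by
    calc P * z * Q = P * z * P * Q := by rw [mul_assoc (P * z), hPQ]
      _ = Q * (P * z * P) := hcomm.eq.symm
      _ = Q * z * P := by rw [← mul_assoc, ← mul_assoc, hQP]
  have hQzQ : Q * z * Q = P * z * Q := by
    calc Q * z * Q = Q * (P * z * P) * Q := by
          rw [← mul_assoc Q, ← mul_assoc Q, hQP, mul_assoc _ P Q, hPQ]
      _ = P * z * P * Q := by rw [hcomm.eq, mul_assoc _ Q Q, hQ.eq]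
      _ = P * z * Q := by rw [mul_assoc (P * z), hPQ]
  simp only [mul_sub, sub_mul]
  rw [← hPzQ, ← hQzQ]
  abel

structure IsCondExpFiltration {n ι : Type*} [Fintype n] [DecidableEq n] [LinearOrder ι]
    (E : ι → Matrix n n ℂ →ₗ[ℂ] Matrix n n ℂ) : Prop where
  comp_eq_min : ∀ i j, (E i).comp (E j) = E (min i j)
  map_one : ∀ i, E i 1 = 1
  posSemidef : ∀ i x, x.PosSemidef → (E i x).PosSemidef
  trace_map : ∀ i x, (E i x).trace = x.trace
  map_mul_mul : ∀ i a b x, E i a = a → E i b = b → E i (a * x * b) = a * E i x * b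

namespace IsCondExpFiltration

section LinearOrder

variable {n ι : Type*} [Fintype n] [DecidableEq n] [LinearOrder ι]
  {E : ι → Matrix n n ℂ →ₗ[ℂ] Matrix n n ℂ} {i j : ι} {a c : Matrix n n ℂ}

theorem map_map (hE : IsCondExpFiltration E) (i j : ι) (a : Matrix n n ℂ) :
    E i (E j a) = E (min i j) a :=
  LinearMap.congr_fun (hE.comp_eq_min i j) a

theorem map_map_self (hE : IsCondExpFiltration E) (i : ι) (a : Matrix n n ℂ) :
    E i (E i a) = E i a := by
  rw [hE.map_map, min_self]

theorem map_map_of_le (hE : IsCondExpFiltration E) (hij : i ≤ j) (a : Matrix n n ℂ) :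
    E i (E j a) = E i a := by
  rw [hE.map_map, min_eq_left hij]

theorem map_eq_of_le (hE : IsCondExpFiltration E) (hij : i ≤ j) (ha : E i a = a) :
    E j a = a := by
  rw [← ha, hE.map_map, min_eq_right hij]

theorem map_mul_left (hE : IsCondExpFiltration E) (ha : E i a = a) (c : Matrix n n ℂ) :
    E i (a * c) = a * E i c := by
  simpa using hE.map_mul_mul i a 1 c ha (hE.map_one i)

theorem trace_mul_map (hE : IsCondExpFiltration E) (ha : E i a = a) (c : Matrix n n ℂ) :
    (a * E i c).trace = (a * c).trace := by
  rw [← hE.map_mul_left ha, hE.trace_map]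

theorem trace_mul_eq_zero_of_map_eq_zero (hE : IsCondExpFiltration E) (ha : E i a = a)
    (hc : E i c = 0) : (a * c).trace = 0 := by
  rw [← hE.trace_mul_map ha, hc, Matrix.mul_zero, trace_zero]

theorem trace_mul_sub_map_eq_zero (hE : IsCondExpFiltration E) (ha : E i a = a)
    (c : Matrix n n ℂ) : (a * (c - E i c)).trace = 0 :=
  hE.trace_mul_eq_zero_of_map_eq_zero ha (by rw [map_sub, hE.map_map_self, sub_self])

theorem trace_sub_map_mul_self (hE : IsCondExpFiltration E) (i : ι) (c : Matrix n n ℂ) :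
    ((c - E i c) * (c - E i c)).trace = (c * c).trace - (E i c * E i c).trace := by
  have h := hE.trace_mul_sub_map_eq_zero (hE.map_map_self i c) c
  rw [Matrix.mul_sub, trace_sub, sub_eq_zero] at h
  rw [Matrix.sub_mul, Matrix.mul_sub, Matrix.mul_sub, trace_sub, trace_sub, trace_sub,
    trace_mul_comm c (E i c), h]
  ring

end LinearOrder

section Nat

open Finset

variable {n : Type*} [Fintype n] [DecidableEq n]
  {E : ℕ → Matrix n n ℂ →ₗ[ℂ] Matrix n n ℂ}
  {a : Matrix n n ℂ} {d : ℕ → Matrix n n ℂ}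

theorem map_add_sum_of_adapted (hE : IsCondExpFiltration E) (ha : E 0 a = a)
    (hd : ∀ j, E (j + 1) (d j) = d j) (K : ℕ) :
    E K (a + ∑ j ∈ range K, d j) = a + ∑ j ∈ range K, d j := by
  rw [map_add, map_sum, hE.map_eq_of_le K.zero_le ha]
  congr 1
  exact sum_congr rfl fun j hj => hE.map_eq_of_le (mem_range.mp hj) (hd j)

theorem trace_add_sum_mul_self (hE : IsCondExpFiltration E) (ha : E 0 a = a)
    (hd : ∀ j, E (j + 1) (d j) = d j) (hd0 : ∀ j, E j (d j) = 0) (K : ℕ) :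
    ((a + ∑ j ∈ range K, d j) * (a + ∑ j ∈ range K, d j)).trace
      = (a * a).trace + ∑ j ∈ range K, (d j * d j).trace := by
  induction K with
  | zero => simp
  | succ K ih =>
    have horth :=
      hE.trace_mul_eq_zero_of_map_eq_zero (hE.map_add_sum_of_adapted ha hd K) (hd0 K)
    rw [sum_range_succ, ← add_assoc, trace_add_mul_self_of_trace_mul_eq_zero horth, ih,
      sum_range_succ, add_assoc]

end Nat

end IsCondExpFiltration

namespace Cuculescu

variable {n : Type*} [Fintype n]

def cutExp (E : ℕ → Matrix n n ℂ →ₗ[ℂ] Matrix n n ℂ) (f : Matrix n n ℂ)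
    (q : ℕ → Matrix n n ℂ) (j : ℕ) : Matrix n n ℂ :=
  q j * E j f * q j

def diffProj (q : ℕ → Matrix n n ℂ) (j : ℕ) : Matrix n n ℂ :=
  q j - q (j + 1)

def cutDefect (E : ℕ → Matrix n n ℂ →ₗ[ℂ] Matrix n n ℂ) (f : Matrix n n ℂ)
    (q : ℕ → Matrix n n ℂ) (j : ℕ) : Matrix n n ℂ :=
  diffProj q j * E (j + 1) f * diffProj q j

def martingaleDiff (E : ℕ → Matrix n n ℂ →ₗ[ℂ] Matrix n n ℂ) (f : Matrix n n ℂ)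
    (q : ℕ → Matrix n n ℂ) (j : ℕ) : Matrix n n ℂ :=
  cutExp E f q (j + 1) - E j (cutExp E f q (j + 1))

def goodPart (E : ℕ → Matrix n n ℂ →ₗ[ℂ] Matrix n n ℂ) (f : Matrix n n ℂ)
    (q : ℕ → Matrix n n ℂ) (N : ℕ) : Matrix n n ℂ :=
  q N * f * q N + ∑ j ∈ Finset.range N, E j (diffProj q j * f * diffProj q j)

end Cuculescu

structure IsCuculescuSeq {n : Type*} [Fintype n] [DecidableEq n]
    (E : ℕ → Matrix n n ℂ →ₗ[ℂ] Matrix n n ℂ) (f : Matrix n n ℂ) (lam : ℝ)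
    (q : ℕ → Matrix n n ℂ) : Prop where
  zero : q 0 = 1
  map_self : ∀ j, E j (q j) = q j
  isStarProjection : ∀ j, IsStarProjection (q j)
  succ_mul : ∀ j, q (j + 1) * q j = q (j + 1)
  cutExp_le : ∀ j, ((lam : ℂ) • q j - q j * E j f * q j).PosSemidef
  commute : ∀ j, Commute (q (j + 1)) (q j * E (j + 1) f * q j)

namespace IsCuculescuSeq

open Finset Cuculescu

variable {n : Type*} [Fintype n] [DecidableEq n]
  {E : ℕ → Matrix n n ℂ →ₗ[ℂ] Matrix n n ℂ}
  {f : Matrix n n ℂ} {lam : ℝ} {q : ℕ → Matrix n n ℂ}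

theorem mul_succ (hq : IsCuculescuSeq E f lam q) (j : ℕ) : q j * q (j + 1) = q (j + 1) := by
  simpa only [star_mul, (hq.isStarProjection _).isSelfAdjoint.star_eq] using
    congrArg star (hq.succ_mul j)

theorem isStarProjection_diffProj (hq : IsCuculescuSeq E f lam q) (j : ℕ) :
    IsStarProjection (diffProj q j) :=
  (hq.isStarProjection (j + 1)).sub_of_mul_eq_left (hq.isStarProjection j) (hq.succ_mul j)

theorem map_cutExp_of_le (hq : IsCuculescuSeq E f lam q) (hE : IsCondExpFiltration E)
    {i j : ℕ} (hij : i ≤ j) : E j (cutExp E f q i) = cutExp E f q i := by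
  refine hE.map_eq_of_le hij ?_
  rw [cutExp, hE.map_mul_mul _ _ _ _ (hq.map_self i) (hq.map_self i), hE.map_map_self]

theorem cutExp_posSemidef (hq : IsCuculescuSeq E f lam q) (hE : IsCondExpFiltration E)
    (hf : f.PosSemidef) (j : ℕ) : (cutExp E f q j).PosSemidef :=
  (hE.posSemidef j f hf).mul_mul_of_isSelfAdjoint (hq.isStarProjection j).isSelfAdjoint

theorem cutDefect_posSemidef (hq : IsCuculescuSeq E f lam q) (hE : IsCondExpFiltration E)
    (hf : f.PosSemidef) (j : ℕ) : (cutDefect E f q j).PosSemidef :=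
  (hE.posSemidef _ f hf).mul_mul_of_isSelfAdjoint
    (hq.isStarProjection_diffProj j).isSelfAdjoint

theorem cutExp_le_smul_one (hq : IsCuculescuSeq E f lam q) (hlam : 0 ≤ lam) (j : ℕ) :
    ((lam : ℂ) • 1 - cutExp E f q j).PosSemidef := by
  have h : (lam : ℂ) • 1 - cutExp E f q j
      = ((lam : ℂ) • q j - cutExp E f q j) + (lam : ℂ) • (1 - q j) := by
    rw [smul_sub]; abel
  rw [h]
  exact (hq.cutExp_le j).add
    ((hq.isStarProjection j).one_sub.posSemidef.smul (Complex.zero_le_real.mpr hlam))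

theorem map_succ_diffProj_mul_mul (hq : IsCuculescuSeq E f lam q) (hE : IsCondExpFiltration E)
    (j : ℕ) : E (j + 1) (diffProj q j * f * diffProj q j) = cutDefect E f q j := by
  have hp : E (j + 1) (diffProj q j) = diffProj q j := by
    rw [diffProj, map_sub, hE.map_eq_of_le j.le_succ (hq.map_self j), hq.map_self]
  exact hE.map_mul_mul _ _ _ _ hp hp

theorem cutExp_succ_add_cutDefect (hq : IsCuculescuSeq E f lam q) (j : ℕ) :
    cutExp E f q (j + 1) + cutDefect E f q j = q j * E (j + 1) f * q j :=
  ((hq.isStarProjection (j + 1)).isIdempotentElem.mul_mul_eq_add_sub_mul_mul_sub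
    (hq.succ_mul j) (hq.mul_succ j) (hq.commute j)).symm

theorem map_cutExp_succ (hq : IsCuculescuSeq E f lam q) (hE : IsCondExpFiltration E)
    (j : ℕ) : E j (cutExp E f q (j + 1)) = cutExp E f q j - E j (cutDefect E f q j) := by
  rw [eq_sub_iff_add_eq, ← map_add, hq.cutExp_succ_add_cutDefect,
    hE.map_mul_mul _ _ _ _ (hq.map_self j) (hq.map_self j), hE.map_map_of_le j.le_succ, cutExp]

theorem map_diffProj_mul_mul (hq : IsCuculescuSeq E f lam q) (hE : IsCondExpFiltration E)
    (j : ℕ) : E j (diffProj q j * f * diffProj q j)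
      = cutExp E f q j - E j (cutExp E f q (j + 1)) := by
  rw [← hE.map_map_of_le j.le_succ, hq.map_succ_diffProj_mul_mul hE, hq.map_cutExp_succ hE,
    sub_sub_cancel]

theorem trace_cutDefect (hq : IsCuculescuSeq E f lam q) (hE : IsCondExpFiltration E)
    (j : ℕ) : (cutDefect E f q j).trace = (q j * f).trace - (q (j + 1) * f).trace := by
  rw [← hq.map_succ_diffProj_mul_mul hE, hE.trace_map, trace_mul_cycle,
    (hq.isStarProjection_diffProj j).isIdempotentElem.eq, diffProj, Matrix.sub_mul, trace_sub]

theorem sum_re_trace_cutDefect (hq : IsCuculescuSeq E f lam q) (hE : IsCondExpFiltration E)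
    (N : ℕ) :
    ∑ j ∈ range N, (cutDefect E f q j).trace.re = f.trace.re - (q N * f).trace.re := by
  simp only [hq.trace_cutDefect hE, Complex.sub_re]
  rw [sum_range_sub' (fun j => (q j * f).trace.re), hq.zero, Matrix.one_mul]

theorem re_trace_cutExp_mul_self_le (hq : IsCuculescuSeq E f lam q)
    (hE : IsCondExpFiltration E) (hf : f.PosSemidef) (j : ℕ) :
    (cutExp E f q j * cutExp E f q j).trace.re ≤ lam * (q j * f).trace.re := by
  rw [← hE.trace_mul_map (hq.map_self j)]
  exact (hq.isStarProjection j).re_trace_mul_mul_sq_le (hE.posSemidef j f hf) (hq.cutExp_le j)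

theorem re_trace_cutExp_zero_mul (hq : IsCuculescuSeq E f lam q) (hE : IsCondExpFiltration E)
    (N : ℕ) : (cutExp E f q 0 * cutExp E f q N).trace.re
      = (cutExp E f q 0 * cutExp E f q 0).trace.re
        - ∑ j ∈ range N, (cutExp E f q 0 * cutDefect E f q j).trace.re := by
  induction N with
  | zero => simp
  | succ k ih =>
    have hx0 := hq.map_cutExp_of_le hE k.zero_le
    rw [← hE.trace_mul_map hx0, hq.map_cutExp_succ hE, Matrix.mul_sub, trace_sub,
      hE.trace_mul_map hx0, Complex.sub_re, ih, sum_range_succ]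
    ring

theorem re_trace_sub_cutExp_mul_self_le (hq : IsCuculescuSeq E f lam q)
    (hE : IsCondExpFiltration E) (hf : f.PosSemidef) (hlam : 0 ≤ lam) (N : ℕ) :
    ((cutExp E f q N - cutExp E f q 0) * (cutExp E f q N - cutExp E f q 0)).trace.re
      ≤ lam * f.trace.re := by
  set x := cutExp E f q
  have hcross := hq.re_trace_cutExp_zero_mul hE N
  have hcross_nonneg :=
    (hq.cutExp_posSemidef hE hf 0).re_trace_mul_nonneg (hq.cutExp_posSemidef hE hf N)
  have hdefect : ∑ j ∈ range N, (x 0 * cutDefect E f q j).trace.re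
      ≤ lam * (f.trace.re - (q N * f).trace.re) := by
    rw [← hq.sum_re_trace_cutDefect hE, mul_sum]
    refine sum_le_sum fun j _ => ?_
    rw [trace_mul_comm]
    exact (hq.cutDefect_posSemidef hE hf j).re_trace_mul_le_of_le_smul
      (hq.cutExp_le_smul_one hlam 0) (Matrix.mul_one _)
  have hN := hq.re_trace_cutExp_mul_self_le hE hf N
  simp only [Matrix.sub_mul, Matrix.mul_sub, trace_sub, Complex.sub_re,
    trace_mul_comm (x N) (x 0)]
  linarith

theorem martingaleDiff_isHermitian (hq : IsCuculescuSeq E f lam q)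
    (hE : IsCondExpFiltration E) (hf : f.PosSemidef) (j : ℕ) :
    (martingaleDiff E f q j).IsHermitian :=
  (hq.cutExp_posSemidef hE hf (j + 1)).1.sub
    (hE.posSemidef j _ (hq.cutExp_posSemidef hE hf (j + 1))).1

theorem map_succ_martingaleDiff (hq : IsCuculescuSeq E f lam q) (hE : IsCondExpFiltration E)
    (j : ℕ) : E (j + 1) (martingaleDiff E f q j) = martingaleDiff E f q j := by
  rw [martingaleDiff, map_sub, hq.map_cutExp_of_le hE le_rfl,
    hE.map_eq_of_le j.le_succ (hE.map_map_self _ _)]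

theorem map_martingaleDiff (hE : IsCondExpFiltration E) (j : ℕ) :
    E j (martingaleDiff E f q j) = 0 := by
  rw [martingaleDiff, map_sub, hE.map_map_self, sub_self]

theorem re_trace_martingaleDiff_mul_self_le (hq : IsCuculescuSeq E f lam q)
    (hE : IsCondExpFiltration E) (hf : f.PosSemidef) (hlam : 0 ≤ lam) (j : ℕ) :
    (martingaleDiff E f q j * martingaleDiff E f q j).trace.re
      ≤ (cutExp E f q (j + 1) * cutExp E f q (j + 1)).trace.re
        - (cutExp E f q j * cutExp E f q j).trace.re
        + 2 * lam * (cutDefect E f q j).trace.re := by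
  rw [martingaleDiff, hE.trace_sub_map_mul_self, hq.map_cutExp_succ hE]
  set x := cutExp E f q j
  set s := E j (cutDefect E f q j)
  have hs : s.PosSemidef := hE.posSemidef _ _ (hq.cutDefect_posSemidef hE hf j)
  have hsx : (s * x).trace.re ≤ lam * (cutDefect E f q j).trace.re := by
    rw [← hE.trace_map j (cutDefect E f q j)]
    exact hs.re_trace_mul_le_of_le_smul (hq.cutExp_le_smul_one hlam j) (Matrix.mul_one s)
  have hss := hs.re_trace_mul_nonneg hs
  simp only [Matrix.sub_mul, Matrix.mul_sub, trace_sub, Complex.sub_re, trace_mul_comm x s]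
  linarith

theorem sum_re_trace_martingaleDiff_mul_self_le (hq : IsCuculescuSeq E f lam q)
    (hE : IsCondExpFiltration E) (hf : f.PosSemidef) (hlam : 0 ≤ lam) (N : ℕ) :
    ∑ j ∈ range N, (martingaleDiff E f q j * martingaleDiff E f q j).trace.re
      ≤ (cutExp E f q N * cutExp E f q N).trace.re
        - (cutExp E f q 0 * cutExp E f q 0).trace.re
        + 2 * lam * (f.trace.re - (q N * f).trace.re) := by
  calc _ ≤ ∑ j ∈ range N, ((cutExp E f q (j + 1) * cutExp E f q (j + 1)).trace.re
          - (cutExp E f q j * cutExp E f q j).trace.re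
          + 2 * lam * (cutDefect E f q j).trace.re) :=
        sum_le_sum fun j _ => hq.re_trace_martingaleDiff_mul_self_le hE hf hlam j
    _ = _ := by
        rw [sum_add_distrib,
          sum_range_sub (fun j => (cutExp E f q j * cutExp E f q j).trace.re), ← mul_sum,
          hq.sum_re_trace_cutDefect hE]

theorem sum_re_trace_martingaleDiff_mul_self_le_two_mul (hq : IsCuculescuSeq E f lam q)
    (hE : IsCondExpFiltration E) (hf : f.PosSemidef) (hlam : 0 ≤ lam) (N : ℕ) :
    ∑ j ∈ range N, (martingaleDiff E f q j * martingaleDiff E f q j).trace.re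
      ≤ 2 * lam * f.trace.re := by
  have hx0 := hq.cutExp_posSemidef hE hf 0
  linarith [hq.sum_re_trace_martingaleDiff_mul_self_le hE hf hlam N,
    hq.re_trace_cutExp_mul_self_le hE hf N, hx0.re_trace_mul_nonneg hx0,
    mul_nonneg hlam ((hq.isStarProjection N).posSemidef.re_trace_mul_nonneg hf)]

theorem goodPart_eq (hq : IsCuculescuSeq E f lam q) (hE : IsCondExpFiltration E) (N : ℕ) :
    goodPart E f q N
      = (cutExp E f q 0 + ∑ j ∈ range N, martingaleDiff E f q j)
        + (q N * f * q N - E N (q N * f * q N)) := by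
  have hterm : ∀ j, cutExp E f q j - E j (cutExp E f q (j + 1))
      = (cutExp E f q j - cutExp E f q (j + 1)) + martingaleDiff E f q j :=
    fun j => by rw [martingaleDiff]; abel
  rw [goodPart, sum_congr rfl fun j _ => hq.map_diffProj_mul_mul hE j,
    hE.map_mul_mul _ _ _ _ (hq.map_self N) (hq.map_self N), sum_congr rfl fun j _ => hterm j,
    sum_add_distrib, sum_range_sub' (cutExp E f q), ← cutExp]
  abel

theorem goodPart_posSemidef (hq : IsCuculescuSeq E f lam q) (hE : IsCondExpFiltration E)
    (hf : f.PosSemidef) (N : ℕ) : (goodPart E f q N).PosSemidef :=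
  (hf.mul_mul_of_isSelfAdjoint (hq.isStarProjection N).isSelfAdjoint).add
    (posSemidef_sum _ fun j _ => hE.posSemidef j _
      (hf.mul_mul_of_isSelfAdjoint (hq.isStarProjection_diffProj j).isSelfAdjoint))

theorem re_trace_goodPart_mul_self_le (hq : IsCuculescuSeq E f lam q)
    (hE : IsCondExpFiltration E) (hf : f.PosSemidef) (hlam : 0 ≤ lam) {N : ℕ}
    (hqf : ((lam : ℂ) • q N - q N * f * q N).PosSemidef) :
    (goodPart E f q N * goodPart E f q N).trace.re ≤ 2 * lam * f.trace.re := by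
  have hx0 : E 0 (cutExp E f q 0) = cutExp E f q 0 := hq.map_cutExp_of_le hE le_rfl
  have hd := hq.map_succ_martingaleDiff hE
  have horth :=
    hE.trace_mul_sub_map_eq_zero (hE.map_add_sum_of_adapted hx0 hd N) (q N * f * q N)
  rw [hq.goodPart_eq hE, trace_add_mul_self_of_trace_mul_eq_zero horth,
    hE.trace_add_sum_mul_self hx0 hd (map_martingaleDiff hE), hE.trace_sub_map_mul_self,
    hE.map_mul_mul _ _ _ _ (hq.map_self N) (hq.map_self N), ← cutExp]
  have hsum := hq.sum_re_trace_martingaleDiff_mul_self_le hE hf hlam N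
  have htop := (hq.isStarProjection N).re_trace_mul_mul_sq_le hf hqf
  have hqNf := mul_nonneg hlam ((hq.isStarProjection N).posSemidef.re_trace_mul_nonneg hf)
  simp only [Complex.add_re, Complex.sub_re, Complex.re_sum]
  linarith

end IsCuculescuSeq

theorem cz_good_part_nonregular_general {m : ℕ}
    (E : ℕ → Matrix (Fin m) (Fin m) ℂ →ₗ[ℂ] Matrix (Fin m) (Fin m) ℂ)
    (htower : ∀ j k, (E j).comp (E k) = E (min j k))
    (hpos : ∀ j x, x.PosSemidef → (E j x).PosSemidef)
    (htr : ∀ j x, (E j x).trace = x.trace)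
    (hbimod : ∀ j (a b x : Matrix (Fin m) (Fin m) ℂ),
        E j a = a → E j b = b → E j (a * x * b) = a * E j x * b)
    (f : Matrix (Fin m) (Fin m) ℂ) (hf : f.PosSemidef)
    (lam : ℝ) (hlam : 0 < lam)
    (q : ℕ → Matrix (Fin m) (Fin m) ℂ)
    (hq0 : q 0 = 1)
    (hqmem : ∀ j, E j (q j) = q j)
    (hqproj : ∀ j, (q j)ᴴ = q j ∧ q j * q j = q j)
    (hqdec : ∀ j, q (j + 1) * q j = q (j + 1) ∧ q j * q (j + 1) = q (j + 1))
    (hqlevel : ∀ j, ((lam : ℂ) • q j - q j * E j f * q j).PosSemidef)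
    (hqcomm : ∀ j,
        q (j + 1) * (q j * E (j + 1) f * q j) = (q j * E (j + 1) f * q j) * q (j + 1))
    (N : ℕ)
    (hqf : ((lam : ℂ) • q N - q N * f * q N).PosSemidef) :
    (∀ j : ℕ,
        E j ((q j - q (j + 1)) * f * (q j - q (j + 1)))
          = q j * E j f * q j - E j (q (j + 1) * E (j + 1) f * q (j + 1))) ∧
    frobSq (∑ j ∈ Finset.range N,
        (q (j + 1) * E (j + 1) f * q (j + 1) - q j * E j f * q j))
      ≤ lam * traceNorm f ∧
    (∑ j ∈ Finset.range N,
        frobSq (q (j + 1) * E (j + 1) f * q (j + 1)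
          - E j (q (j + 1) * E (j + 1) f * q (j + 1))))
      ≤ 2 * lam * traceNorm f ∧
    frobSq (q N * f * q N
        + ∑ j ∈ Finset.range N, E j ((q j - q (j + 1)) * f * (q j - q (j + 1))))
      ≤ 6 * lam * traceNorm f := by
  have hE : IsCondExpFiltration E :=
    { comp_eq_min := htower
      map_one := fun j => by
        rw [← hq0, ← hqmem 0, ← LinearMap.comp_apply, htower, Nat.min_zero]
      posSemidef := hpos
      trace_map := htr
      map_mul_mul := hbimod }
  have hq : IsCuculescuSeq E f lam q :=
    ⟨hq0, hqmem, fun j => ⟨(hqproj j).2, (hqproj j).1⟩, fun j => (hqdec j).1, hqlevel,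
      hqcomm⟩
  have hx := hq.cutExp_posSemidef hE hf
  rw [traceNorm_of_posSemidef hf]
  refine ⟨hq.map_diffProj_mul_mul hE, ?_, ?_, ?_⟩
  · change frobSq (∑ j ∈ Finset.range N,
      (Cuculescu.cutExp E f q (j + 1) - Cuculescu.cutExp E f q j)) ≤ _
    rw [Finset.sum_range_sub, frobSq_of_isHermitian ((hx N).1.sub (hx 0).1)]
    exact hq.re_trace_sub_cutExp_mul_self_le hE hf hlam.le N
  · change ∑ j ∈ Finset.range N, frobSq (Cuculescu.martingaleDiff E f q j) ≤ _
    simp only [fun j => frobSq_of_isHermitian (hq.martingaleDiff_isHermitian hE hf j)]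
    exact hq.sum_re_trace_martingaleDiff_mul_self_le_two_mul hE hf hlam.le N
  · refine (frobSq_of_isHermitian (hq.goodPart_posSemidef hE hf N).1).trans_le ?_
    linarith [hq.re_trace_goodPart_mul_self_le hE hf hlam.le hqf,
      mul_nonneg hlam.le hf.re_trace_nonneg]

/-- For a (possibly nonregular) filtration, the good part
`g = qfq + ∑_j E_{j-1}(p_j f p_j)` of the Calderón–Zygmund decomposition at height `λ`
satisfies `‖g‖₂² ≤ 6λ‖f‖₁`.  Moreover `E_{j-1}(p_j f p_j) = q_{j-1}E_{j-1}(f)q_{j-1} -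
E_{j-1}(q_j E_j(f) q_j)`, the telescoping bound
`‖∑_j (q_j E_j(f) q_j - q_{j-1}E_{j-1}(f)q_{j-1})‖₂² ≤ λ‖f‖₁` holds, and
`∑_j ‖q_j E_j(f)q_j - E_{j-1}(q_j E_j(f) q_j)‖₂² ≤ 2λ‖f‖₁`. -/
theorem cz_good_part_nonregular {m : ℕ}
    (E : ℕ → Matrix (Fin m) (Fin m) ℂ →ₗ[ℂ] Matrix (Fin m) (Fin m) ℂ)
    (hidem : ∀ j, (E j).comp (E j) = E j)
    (htower : ∀ j k, (E j).comp (E k) = E (min j k))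
    (hpos : ∀ j x, x.PosSemidef → (E j x).PosSemidef)
    (htr : ∀ j x, (E j x).trace = x.trace)
    (hbimod : ∀ j (a b x : Matrix (Fin m) (Fin m) ℂ),
        E j a = a → E j b = b → E j (a * x * b) = a * E j x * b)
    (f : Matrix (Fin m) (Fin m) ℂ) (hf : f.PosSemidef)
    (lam : ℝ) (hlam : 0 < lam)
    (q : ℕ → Matrix (Fin m) (Fin m) ℂ)
    (hq0 : q 0 = 1)
    (hqmem : ∀ j, E j (q j) = q j)
    (hqproj : ∀ j, (q j)ᴴ = q j ∧ q j * q j = q j)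
    (hqdec : ∀ j, q (j + 1) * q j = q (j + 1) ∧ q j * q (j + 1) = q (j + 1))
    (hqlevel : ∀ j, ((lam : ℂ) • q j - q j * E j f * q j).PosSemidef)
    (hqcomm : ∀ j,
        q (j + 1) * (q j * E (j + 1) f * q j) = (q j * E (j + 1) f * q j) * q (j + 1))
    (N : ℕ) (hstab : ∀ j, N ≤ j → q j = q N)
    (hqf : ((lam : ℂ) • q N - q N * f * q N).PosSemidef) :
    (∀ j : ℕ,
        E j ((q j - q (j + 1)) * f * (q j - q (j + 1)))
          = q j * E j f * q j - E j (q (j + 1) * E (j + 1) f * q (j + 1))) ∧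
    frobSq (∑ j ∈ Finset.range N,
        (q (j + 1) * E (j + 1) f * q (j + 1) - q j * E j f * q j))
      ≤ lam * traceNorm f ∧
    (∑ j ∈ Finset.range N,
        frobSq (q (j + 1) * E (j + 1) f * q (j + 1)
          - E j (q (j + 1) * E (j + 1) f * q (j + 1))))
      ≤ 2 * lam * traceNorm f ∧
    frobSq (q N * f * q N
        + ∑ j ∈ Finset.range N, E j ((q j - q (j + 1)) * f * (q j - q (j + 1))))
      ≤ 6 * lam * traceNorm f :=
  cz_good_part_nonregular_general E htower hpos htr hbimod f hf lam hlam q hq0 hqmem hqproj hqdec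
    hqlevel hqcomm N hqf
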